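/- Let R be a Noetherian ring and I an ideal of R such that the associated graded ring G(I) = ⊕_{n≥0} I^n/I^{n+1} is reduced. Then I^n is integrally closed (i.e. equal to its integral closure) for all n ≥ 1. -/

import Mathlib

open Finset IsLocalRing

/-- Length of a module: longest chain in its submodule lattice. -/
noncomputable def flen (R : Type*) [CommRing R] (M : Type*) [AddCommGroup M] [Module R M] : ℕ :=
  (WithBot.unbotD 0 (Order.krullDim (Submodule R M))).toNat

/-- Length `λ(P/N)` of the subquotient of `R` by submodules `N ≤ P`. -/
noncomputable def lenq {R : Type*} [CommRing R] (P N : Submodule R R) : ℕ :=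
  flen R (↥P ⧸ (N.comap P.subtype))

/-- `x` is integral over the ideal `I`: it satisfies an equation
`x^n + a 1 * x^(n-1) + ⋯ + a n = 0` with `a i ∈ I^i`. -/
def Ideal.IsIntOver {R : Type*} [CommRing R] (I : Ideal R) (x : R) : Prop :=
  ∃ (n : ℕ) (a : ℕ → R), 0 < n ∧ (∀ i ∈ Finset.Icc 1 n, a i ∈ I ^ i) ∧
    x ^ n + ∑ i ∈ Finset.Icc 1 n, a i * x ^ (n - i) = 0

/-- The integral closure of an ideal (the set of integral elements is an ideal,
so taking the span is harmless). -/
def Ideal.intCl {R : Type*} [CommRing R] (I : Ideal R) : Ideal R :=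
  Ideal.span {x | I.IsIntOver x}

/-!
View `G(I)` as `R[It] ⧸ I·R[It]`. Let `x` be integral over `I ^ n` and `x ∈ I ^ r` with `r < n`.
Each term `aᵢ x^(m-i)` of its equation lies in `I ^ (r m + i)`, so `x ^ m ∈ I ^ (r m + 1)`:
the initial form `x tʳ` is nilpotent in `G(I)`, hence zero, i.e. `x ∈ I ^ (r + 1)`.
Induction on `r` gives `x ∈ I ^ n`.
-/

open Polynomial

namespace Ideal

variable {R : Type*} [CommRing R] {I : Ideal R}

lemma coeff_mem_pow_succ_of_mem_map {q : reesAlgebra I}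
    (hq : q ∈ I.map (algebraMap R (reesAlgebra I))) (j : ℕ) :
    (q : R[X]).coeff j ∈ I ^ (j + 1) := by
  induction hq using Submodule.span_induction generalizing j with
  | mem _ hb =>
    obtain ⟨b, hb, rfl⟩ := hb
    rw [Subalgebra.coe_algebraMap, algebraMap_eq, coeff_C]
    split_ifs with h
    · simpa [h] using hb
    · exact zero_mem _
  | zero => simp
  | add _ _ _ _ hp hq => simpa using add_mem (hp j) (hq j)
  | smul a p _ hp =>
    rw [smul_eq_mul, Subalgebra.coe_mul, coeff_mul]
    refine Ideal.sum_mem _ fun c hc => ?_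
    rw [Finset.HasAntidiagonal.mem_antidiagonal] at hc
    have := mul_mem_mul (a.2 c.1) (hp c.2)
    rwa [← pow_add, show c.1 + (c.2 + 1) = j + 1 by omega] at this

lemma monomial_mem_map {s : ℕ} {y : R} (hy : y ∈ I ^ (s + 1))
    (h : monomial s y ∈ reesAlgebra I) :
    (⟨monomial s y, h⟩ : reesAlgebra I) ∈ I.map (algebraMap R (reesAlgebra I)) := by
  rw [pow_succ] at hy
  induction hy using Submodule.mul_induction_on' with
  | mem_mul_mem b hb a ha =>
    convert mul_mem_left _ ⟨monomial s b, reesAlgebra.monomial_mem.mpr hb⟩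
      (mem_map_of_mem (algebraMap R (reesAlgebra I)) ha) using 1
    exact Subtype.ext (by simp [C_mul_monomial, mul_comm])
  | add y₁ hy₁ y₂ hy₂ h₁ h₂ =>
    have mem (y : R) (hy : y ∈ I ^ s * I) : monomial s y ∈ reesAlgebra I :=
      reesAlgebra.monomial_mem.mpr (mul_le_left hy)
    have : (⟨monomial s (y₁ + y₂), h⟩ : reesAlgebra I) =
        ⟨monomial s y₁, mem y₁ hy₁⟩ + ⟨monomial s y₂, mem y₂ hy₂⟩ :=
      Subtype.ext (map_add _ y₁ y₂)
    rw [this]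
    exact add_mem (h₁ _) (h₂ _)

lemma mem_pow_succ_of_pow_mem_pow
    (hred : IsReduced (reesAlgebra I ⧸ I.map (algebraMap R (reesAlgebra I))))
    {x : R} {r m : ℕ} (hxr : x ∈ I ^ r) (hxm : x ^ m ∈ I ^ (r * m + 1)) :
    x ∈ I ^ (r + 1) := by
  let e : reesAlgebra I := ⟨monomial r x, reesAlgebra.monomial_mem.mpr hxr⟩
  have he : e ^ m = ⟨monomial (r * m) (x ^ m),
      reesAlgebra.monomial_mem.mpr (pow_le_pow_right (r * m).le_succ hxm)⟩ :=
    Subtype.ext (by simp [e, monomial_pow])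
  have hnil : IsNilpotent (Quotient.mk (I.map (algebraMap R (reesAlgebra I))) e) :=
    ⟨m, by rw [← map_pow, Quotient.eq_zero_iff_mem, he]; exact monomial_mem_map hxm _⟩
  simpa [e] using coeff_mem_pow_succ_of_mem_map (Quotient.eq_zero_iff_mem.mp hnil.eq_zero) r

lemma IsIntOver.exists_pow_mem_pow {J : Ideal R} {x : R} (hx : J.IsIntOver x) {r : ℕ}
    (hxr : x ∈ I ^ r) (hJ : J ≤ I ^ (r + 1)) : ∃ m, x ^ m ∈ I ^ (r * m + 1) := by
  obtain ⟨m, a, -, ha, heq⟩ := hx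
  refine ⟨m, ?_⟩
  rw [eq_neg_of_add_eq_zero_left heq]
  refine neg_mem (Ideal.sum_mem _ fun i hi => ?_)
  obtain ⟨hi₁, him⟩ := Finset.mem_Icc.mp hi
  have hai : a i ∈ I ^ ((r + 1) * i) := pow_mul I (r + 1) i ▸ pow_right_mono hJ i (ha i hi)
  have hxi : x ^ (m - i) ∈ I ^ (r * (m - i)) := pow_mul I r (m - i) ▸ pow_mem_pow hxr _
  have hdeg : (r + 1) * i + r * (m - i) = r * m + i := by
    obtain ⟨k, rfl⟩ := Nat.exists_eq_add_of_le him
    rw [Nat.add_sub_cancel_left]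
    ring
  exact pow_le_pow_right (by omega) (pow_add I _ _ ▸ mul_mem_mul hai hxi)

lemma mem_pow_of_isIntOver_pow
    (hred : IsReduced (reesAlgebra I ⧸ I.map (algebraMap R (reesAlgebra I))))
    {n : ℕ} {x : R} (hx : (I ^ n).IsIntOver x) : x ∈ I ^ n := by
  suffices ∀ r ≤ n, x ∈ I ^ r from this n le_rfl
  intro r hr
  induction r with
  | zero => simp
  | succ r ih =>
    have hxr := ih (by omega)
    obtain ⟨m, hxm⟩ := hx.exists_pow_mem_pow hxr (pow_le_pow_right hr)
    exact mem_pow_succ_of_pow_mem_pow hred hxr hxm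

lemma le_intCl (I : Ideal R) : I ≤ I.intCl := fun x hx =>
  subset_span ⟨1, fun _ => -x, one_pos, by simpa using hx, by simp⟩

end Ideal

theorem stmt_0_general {R : Type*} [CommRing R] (I : Ideal R)
    (hred : IsReduced
      (↥(reesAlgebra I) ⧸ (I.map (algebraMap R ↥(reesAlgebra I)))))
    (n : ℕ) :
    (I ^ n).intCl = I ^ n :=
  le_antisymm (Ideal.span_le.mpr fun _ hx => Ideal.mem_pow_of_isIntOver_pow hred hx)
    (I ^ n).le_intCl

/-- If `R` is Noetherian and the associated graded ring
`G(I) ≅ (Rees algebra of I)/(I · Rees algebra of I)` is reduced,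
then `I^n` is integrally closed for all `n ≥ 1`. -/
theorem stmt_0 {R : Type*} [CommRing R] [IsNoetherianRing R] (I : Ideal R)
    (hred : IsReduced
      (↥(reesAlgebra I) ⧸ (I.map (algebraMap R ↥(reesAlgebra I)))))
    (n : ℕ) (hn : 1 ≤ n) :
    (I ^ n).intCl = I ^ n :=
  stmt_0_general I hred n
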